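/- Let K = (K_1,...,K_k) be a field operator for L on ℝ^n × (ℝ^n)^k: a k-tuple of vector fields along FL satisfying the structural, field-equation, and second-order conditions. Then in coordinates K_A = v^i_A (∂/∂q^i ∘ FL) + (K_A)^B_i (∂/∂p^B_i ∘ FL), where the components satisfy Σ_{A=1}^k (K_A)^A_i = ∂L/∂q^i for each i. Conversely, any such coordinate expression with this identity defines a field operator. -/

import Mathlib

open scoped BigOperators

noncomputable section

/-- The coordinate model of `T^1_kQ` (or `(T^1_k)^*Q`): points `(q^i, v^i_A)` (resp. `(q^i, p^A_i)`). -/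
abbrev Ek (n k : ℕ) : Type := (Fin n → ℝ) × (Fin k → Fin n → ℝ)

/-- The coordinate tangent direction `∂/∂q^i`. -/
def Qdir (n k : ℕ) (i : Fin n) : Ek n k := (Pi.single i 1, 0)

/-- The coordinate tangent direction `∂/∂v^i_A` (resp. `∂/∂p^A_i`). -/
def Vdir (n k : ℕ) (A : Fin k) (i : Fin n) : Ek n k :=
  (0, Pi.single A (Pi.single i 1))

/-- The canonical 2-form `(ω₀)_A = Σ_i dq^i ∧ dp^A_i` on `(T^1_k)^*Q`, evaluated on
two tangent vectors. -/
def omegaCan {n k : ℕ} (A : Fin k) (u w : Ek n k) : ℝ :=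
  ∑ i, (u.1 i * w.2 A i - w.1 i * u.2 A i)

/-- The partial derivative `∂L/∂v^i_A`. -/
def Lv {n k : ℕ} (L : Ek n k → ℝ) (A : Fin k) (i : Fin n) (x : Ek n k) : ℝ :=
  fderiv ℝ L x (Vdir n k A i)

/-- The partial derivative `∂L/∂q^i`. -/
def Lq {n k : ℕ} (L : Ek n k → ℝ) (i : Fin n) (x : Ek n k) : ℝ :=
  fderiv ℝ L x (Qdir n k i)

/-- The Lagrangian 2-form `(ω_L)_A = -d((∂L/∂v^i_A) dq^i) = Σ_i dq^i ∧ d(∂L/∂v^i_A)`,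
evaluated at `x` on two tangent vectors. -/
def omegaL {n k : ℕ} (L : Ek n k → ℝ) (A : Fin k) (x : Ek n k) (u w : Ek n k) : ℝ :=
  ∑ i, (u.1 i * fderiv ℝ (Lv L A i) x w - w.1 i * fderiv ℝ (Lv L A i) x u)

/-- The velocity Hessian `(∂²L/∂v^i_A ∂v^j_B)`, as an `(nk)×(nk)` matrix. -/
def Hess {n k : ℕ} (L : Ek n k → ℝ) (x : Ek n k) :
    Matrix (Fin k × Fin n) (Fin k × Fin n) ℝ :=
  fun p q => fderiv ℝ (Lv L p.1 p.2) x (Vdir n k q.1 q.2)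

/-- The Legendre map `FL(q,v) = (q, ∂L/∂v)`. -/
def FLmap {n k : ℕ} (L : Ek n k → ℝ) (x : Ek n k) : Ek n k :=
  (x.1, fun A i => Lv L A i x)

/-- The energy `E_L = Σ_{A,i} v^i_A ∂L/∂v^i_A − L = C(L) − L`. -/
def energy {n k : ℕ} (L : Ek n k → ℝ) (x : Ek n k) : ℝ :=
  (∑ A, ∑ i, x.2 A i * Lv L A i x) - L x

/-- The second partial derivative `∂²L/∂q^j ∂v^i_A` (first in `v^i_A`, then in `q^j`). -/
def D2vq {n k : ℕ} (L : Ek n k → ℝ) (A : Fin k) (i j : Fin n) (x : Ek n k) : ℝ :=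
  fderiv ℝ (Lv L A i) x (Qdir n k j)

/-- The second partial derivative `∂²L/∂v^j_B ∂v^i_A` (first in `v^i_A`, then in `v^j_B`). -/
def D2vv {n k : ℕ} (L : Ek n k → ℝ) (A : Fin k) (i : Fin n) (B : Fin k) (j : Fin n)
    (x : Ek n k) : ℝ :=
  fderiv ℝ (Lv L A i) x (Vdir n k B j)


/-! ### Auxiliary lemmas -/

/-- Decomposition of a vector of `Ek n k` in the coordinate basis. -/
lemma Ek.decomp {n k : ℕ} (u : Ek n k) :
    u = (∑ i, u.1 i • Qdir n k i) + ∑ A, ∑ i, u.2 A i • Vdir n k A i := by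
  refine Prod.ext ?_ ?_
  · simp only [Prod.fst_add, Prod.fst_sum, Qdir, Vdir, Prod.smul_fst]
    funext j
    simp [Finset.sum_apply, Pi.single_apply, Finset.sum_ite_eq']
  · simp only [Prod.snd_add, Prod.snd_sum, Qdir, Vdir, Prod.smul_snd]
    funext B j
    simp [Finset.sum_apply, Pi.single_apply, Finset.sum_ite_eq', Finset.sum_ite_eq]

/-- A continuous linear functional on `Ek n k` is determined by its values on the basis. -/
lemma clm_decomp {n k : ℕ} (φ : Ek n k →L[ℝ] ℝ) (u : Ek n k) :
    φ u = (∑ i, u.1 i * φ (Qdir n k i)) + ∑ A, ∑ i, u.2 A i * φ (Vdir n k A i) := by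
  conv_lhs => rw [Ek.decomp u]
  simp [map_add, map_sum, map_smul, smul_eq_mul]

lemma lv_contDiff {n k : ℕ} {L : Ek n k → ℝ} (hL : ContDiff ℝ (⊤ : ℕ∞) L) (A : Fin k) (i : Fin n) :
    ContDiff ℝ (⊤ : ℕ∞) (Lv L A i) :=
  (hL.fderiv_right (by simp)).clm_apply contDiff_const

/-- The coordinate projection CLM `x ↦ x.2 A i`. -/
def proj2 (n k : ℕ) (A : Fin k) (i : Fin n) : Ek n k →L[ℝ] ℝ :=
  (ContinuousLinearMap.proj (R := ℝ) (φ := fun _ : Fin n => ℝ) i).comp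
    ((ContinuousLinearMap.proj (R := ℝ) (φ := fun _ : Fin k => Fin n → ℝ) A).comp
      (ContinuousLinearMap.snd ℝ (Fin n → ℝ) (Fin k → Fin n → ℝ)))

lemma fderiv_FL {n k : ℕ} {L : Ek n k → ℝ} (hL : ContDiff ℝ (⊤ : ℕ∞) L) (x u : Ek n k) :
    fderiv ℝ (FLmap L) x u = (u.1, fun A i => fderiv ℝ (Lv L A i) x u) := by
  have h : HasFDerivAt (FLmap L)
      ((ContinuousLinearMap.fst ℝ (Fin n → ℝ) (Fin k → Fin n → ℝ)).prod
        (ContinuousLinearMap.pi fun A => ContinuousLinearMap.pi fun i =>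
          fderiv ℝ (Lv L A i) x)) x := by
    refine HasFDerivAt.prodMk (hasFDerivAt_fst) ?_
    exact hasFDerivAt_pi.mpr fun A => hasFDerivAt_pi.mpr fun i =>
      ((lv_contDiff hL A i).differentiable (by simp) x).hasFDerivAt
  rw [h.fderiv]
  rfl

lemma fderiv_energy {n k : ℕ} {L : Ek n k → ℝ} (hL : ContDiff ℝ (⊤ : ℕ∞) L) (x u : Ek n k) :
    fderiv ℝ (energy L) x u =
      (∑ A, ∑ i, (u.2 A i * Lv L A i x + x.2 A i * fderiv ℝ (Lv L A i) x u))
        - fderiv ℝ L x u := by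
  have hterm : ∀ (A : Fin k) (i : Fin n), HasFDerivAt (fun y : Ek n k => y.2 A i * Lv L A i y)
      (x.2 A i • fderiv ℝ (Lv L A i) x + Lv L A i x • proj2 n k A i) x := by
    intro A i
    exact HasFDerivAt.mul ((proj2 n k A i).hasFDerivAt)
      ((lv_contDiff hL A i).differentiable (by simp) x).hasFDerivAt
  have hsum : HasFDerivAt (fun y : Ek n k => ∑ A, ∑ i, y.2 A i * Lv L A i y)
      (∑ A, ∑ i, (x.2 A i • fderiv ℝ (Lv L A i) x + Lv L A i x • proj2 n k A i)) x :=
    HasFDerivAt.fun_sum fun A _ => HasFDerivAt.fun_sum fun i _ => hterm A i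
  have h : HasFDerivAt (energy L)
      ((∑ A, ∑ i, (x.2 A i • fderiv ℝ (Lv L A i) x + Lv L A i x • proj2 n k A i))
        - fderiv ℝ L x) x :=
    hsum.sub (hL.differentiable (by simp) x).hasFDerivAt
  rw [h.fderiv]
  simp only [ContinuousLinearMap.sub_apply, ContinuousLinearMap.sum_apply,
    ContinuousLinearMap.add_apply, ContinuousLinearMap.smul_apply, smul_eq_mul, proj2,
    ContinuousLinearMap.comp_apply, ContinuousLinearMap.coe_snd',
    ContinuousLinearMap.proj_apply]
  congr 1
  refine Finset.sum_congr rfl fun A _ => Finset.sum_congr rfl fun i _ => ?_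
  ring

/-- a k-tuple `K` of vector fields along `FL` satisfies the field-equation and
second-order conditions of a field operator iff in coordinates
`K_A = v^i_A (∂/∂q^i ∘ FL) + (K_A)^B_i (∂/∂p^B_i ∘ FL)` with `Σ_A (K_A)^A_i = ∂L/∂q^i`. -/
theorem field_operator_coordinates (n k : ℕ) (L : Ek n k → ℝ) (hL : ContDiff ℝ (⊤ : ℕ∞) L)
    (K : Fin k → Ek n k → Ek n k) (x : Ek n k) :
    ((∀ u : Ek n k,
        ∑ A, omegaCan A (K A x) (fderiv ℝ (FLmap L) x u) = fderiv ℝ (energy L) x u) ∧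
     (∀ (A : Fin k) (i : Fin n), (K A x).1 i = x.2 A i)) ↔
      ((∀ (A : Fin k) (i : Fin n), (K A x).1 i = x.2 A i) ∧
       (∀ i : Fin n, ∑ A, (K A x).2 A i = Lq L i x)) := by
  have hDL : ∀ u : Ek n k,
      fderiv ℝ L x u = (∑ i, u.1 i * Lq L i x) + ∑ A, ∑ i, u.2 A i * Lv L A i x := by
    intro u
    simpa [Lq, Lv] using clm_decomp (fderiv ℝ L x) u
  constructor
  · rintro ⟨hfe, hso⟩
    refine ⟨hso, fun i => ?_⟩
    have h := hfe (Qdir n k i)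
    rw [fderiv_energy hL, hDL] at h
    simp only [omegaCan, fderiv_FL hL] at h
    simp only [Qdir, Pi.single_apply, ite_mul, one_mul, zero_mul, mul_zero, mul_ite, mul_one,
      Finset.sum_ite_eq', Finset.mem_univ, if_true, Pi.zero_apply, add_zero,
      Finset.sum_const_zero, zero_add, hso, Finset.sum_sub_distrib] at h
    linarith
  · rintro ⟨hso, htr⟩
    refine ⟨fun u => ?_, hso⟩
    rw [fderiv_energy hL, hDL]
    simp only [omegaCan, fderiv_FL hL, hso]
    have e1 : ∑ A, ∑ j, (x.2 A j * fderiv ℝ (Lv L A j) x u - u.1 j * (K A x).2 A j)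
        = (∑ A, ∑ j, x.2 A j * fderiv ℝ (Lv L A j) x u) - ∑ j, u.1 j * Lq L j x := by
      simp only [Finset.sum_sub_distrib]
      congr 1
      rw [Finset.sum_comm]
      refine Finset.sum_congr rfl fun j _ => ?_
      rw [← Finset.mul_sum, htr j]
    have e2 : ∑ A, ∑ j, (u.2 A j * Lv L A j x + x.2 A j * fderiv ℝ (Lv L A j) x u)
        = (∑ A, ∑ j, u.2 A j * Lv L A j x) + ∑ A, ∑ j, x.2 A j * fderiv ℝ (Lv L A j) x u := by
      simp [Finset.sum_add_distrib]
    rw [e1, e2]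
    ring


end
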